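/- Let s = I(0_K, a_1, ..., a_{T-1}) and s' = I(1_K, a_1, ..., a_{T-1}), and τ = τ_1·T + τ_2 with 1 ≤ τ_2 ≤ T-1. Then R_{ss'}(τ) = R_s(τ) + 2·d(a_{T-τ_2}) and R_{s's}(τ) = R_s(τ) + 2·d(a_{τ_2}). -/

import Mathlib

/-- Periodic (cross-)correlation of binary sequences of period `N`. -/
def corr (N : ℕ) (a b : ℕ → ZMod 2) (τ : ℕ) : ℤ :=
  ∑ t ∈ Finset.range N, (-1 : ℤ) ^ ((a t + b (t + τ)).val)

/-- Balance difference `d(a) = 2|support(a)| - K` of a sequence of period `K`. -/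
def bal (K : ℕ) (a : ℕ → ZMod 2) : ℤ :=
  2 * ((((Finset.range K).filter (fun k => a k = 1)).card : ℤ)) - (K : ℤ)

/-!
Since `s'` differs from `s` exactly in column `0`, the terms of `R_{ss'}(τ)` and of `R_s(τ)`
differ only at the times `t` with `t + τ` in column `0`, i.e. in column `T - τ2`; there the
sign flips, so each row `k` contributes `-2 (-1)^{a_{T-τ2}(k)}`, and summing over the rows gives
`2 d(a_{T-τ2})`. For `R_{s's}(τ)` the differing times are column `0` itself, whose partners
`t + τ` lie in column `τ2`, and the rows now contribute `-2 (-1)^{a_{τ2}(k + τ1)}`, which sum to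
`2 d(a_{τ2})` by periodicity of `a_{τ2}`.
-/

open Finset

theorem Finset.sum_range_mul {M : Type*} [AddCommMonoid M] (K T : ℕ) (f : ℕ → M) :
    ∑ t ∈ range (K * T), f t = ∑ k ∈ range K, ∑ i ∈ range T, f (k * T + i) := by
  induction K with
  | zero => simp
  | succ K ih => rw [Nat.succ_mul, sum_range_add, ih, sum_range_succ]

theorem Finset.sum_range_mul_sub_sum_range_mul {M : Type*} [AddCommGroup M] {K T j : ℕ}
    (hj : j < T) {f g : ℕ → M} (hfg : ∀ k i, i < T → i ≠ j → f (k * T + i) = g (k * T + i)) :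
    ∑ t ∈ range (K * T), f t - ∑ t ∈ range (K * T), g t =
      ∑ k ∈ range K, (f (k * T + j) - g (k * T + j)) := by
  rw [sum_range_mul, sum_range_mul, ← sum_sub_distrib]
  refine sum_congr rfl fun k _ => ?_
  rw [← sum_sub_distrib, sum_eq_single_of_mem j (mem_range.mpr hj)]
  intro i hi hij
  rw [hfg k i (mem_range.mp hi) hij, sub_self]

theorem Function.Periodic.sum_range_add {M : Type*} [AddCancelCommMonoid M] {g : ℕ → M} {K : ℕ}
    (hg : Function.Periodic g K) (m : ℕ) : ∑ k ∈ range K, g (k + m) = ∑ k ∈ range K, g k := by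
  induction m with
  | zero => rfl
  | succ m ih =>
    rw [← ih]
    have hwrap : g (K + m) = g (0 + m) := by rw [add_comm K, hg, zero_add]
    have := (sum_range_succ' (fun k => g (k + m)) K).symm.trans (sum_range_succ _ K)
    rw [hwrap] at this
    simpa only [add_assoc, add_comm 1 m] using add_right_cancel this

theorem ZMod.neg_one_pow_val_add_one (x : ZMod 2) : (-1 : ℤ) ^ (x + 1).val = -(-1) ^ x.val := by
  fin_cases x <;> rfl

theorem sum_neg_one_pow_val_eq_neg_bal (K : ℕ) (b : ℕ → ZMod 2) :
    ∑ k ∈ range K, (-1 : ℤ) ^ (b k).val = -bal K b := by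
  have hsign : ∀ x : ZMod 2, (-1 : ℤ) ^ x.val = 1 - 2 * if x = 1 then 1 else 0 := by decide
  simp only [hsign, sum_sub_distrib, ← mul_sum, sum_boole, bal, sum_const, card_range]
  ring

theorem sum_neg_one_pow_val_add_one_sub (K : ℕ) (b : ℕ → ZMod 2) :
    ∑ k ∈ range K, ((-1 : ℤ) ^ (b k + 1).val - (-1) ^ (b k).val) = 2 * bal K b := by
  simp only [ZMod.neg_one_pow_val_add_one, ← two_mul, ← neg_add', ← mul_sum, sum_neg_distrib,
    sum_neg_one_pow_val_eq_neg_bal]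
  ring

section Interleaved

variable {K T : ℕ} {a : ℕ → ℕ → ZMod 2} {s s' : ℕ → ZMod 2}

theorem corr_zero_one_right (hs0 : ∀ k, s (k * T) = 0) (hs'0 : ∀ k, s' (k * T) = 1)
    (hcol : ∀ k i, 1 ≤ i → i < T → s (k * T + i) = a i k)
    (hcol' : ∀ k i, 1 ≤ i → i < T → s' (k * T + i) = a i k)
    {τ1 τ2 : ℕ} (h1 : 1 ≤ τ2) (h2 : τ2 < T) :
    corr (K * T) s s' (τ1 * T + τ2) = corr (K * T) s s (τ1 * T + τ2) + 2 * bal K (a (T - τ2)) := by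
  have hwrap : ∀ k, k * T + (T - τ2) + (τ1 * T + τ2) = (k + 1 + τ1) * T := by
    intro k
    zify [h2.le]
    ring
  have hoff : ∀ k i, i < T → i ≠ T - τ2 →
      s' (k * T + i + (τ1 * T + τ2)) = s (k * T + i + (τ1 * T + τ2)) := by
    intro k i hi hij
    rcases lt_or_ge (i + τ2) T with hlt | hge
    · rw [show k * T + i + (τ1 * T + τ2) = (k + τ1) * T + (i + τ2) by ring,
        hcol' _ _ (by omega) hlt, hcol _ _ (by omega) hlt]
    · obtain ⟨r, hr⟩ : ∃ r, i + τ2 = T + r := ⟨i + τ2 - T, by omega⟩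
      rw [show k * T + i + (τ1 * T + τ2) = (k + τ1 + 1) * T + r by linear_combination hr,
        hcol' _ _ (by omega) (by omega), hcol _ _ (by omega) (by omega)]
  rw [← sub_eq_iff_eq_add', corr, corr,
    sum_range_mul_sub_sum_range_mul (j := T - τ2) (by omega) fun k i hi hij => by
      rw [hoff k i hi hij]]
  simp only [hwrap, hs0, hs'0, hcol _ _ (by omega : 1 ≤ T - τ2) (by omega : T - τ2 < T),
    add_zero]
  exact sum_neg_one_pow_val_add_one_sub K _

theorem corr_zero_one_left {τ1 τ2 : ℕ} (ha : Function.Periodic (a τ2) K)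
    (hs0 : ∀ k, s (k * T) = 0) (hs'0 : ∀ k, s' (k * T) = 1)
    (hcol : ∀ k i, 1 ≤ i → i < T → s (k * T + i) = a i k)
    (hcol' : ∀ k i, 1 ≤ i → i < T → s' (k * T + i) = a i k)
    (h1 : 1 ≤ τ2) (h2 : τ2 < T) :
    corr (K * T) s' s (τ1 * T + τ2) = corr (K * T) s s (τ1 * T + τ2) + 2 * bal K (a τ2) := by
  have hcol0 : ∀ k, s (k * T + (τ1 * T + τ2)) = a τ2 (k + τ1) := fun k => by
    rw [← hcol _ _ h1 h2]
    ring_nf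
  rw [← sub_eq_iff_eq_add', corr, corr,
    sum_range_mul_sub_sum_range_mul (j := 0) (by omega) fun k i hi hij => by
      rw [hcol' _ _ (by omega) hi, hcol _ _ (by omega) hi]]
  simp only [add_zero, hs0, hs'0, hcol0, zero_add, add_comm (1 : ZMod 2)]
  exact ((ha.comp fun x => (-1 : ℤ) ^ (x + 1).val - (-1) ^ x.val).sum_range_add τ1).trans
    (sum_neg_one_pow_val_add_one_sub K _)

end Interleaved

theorem stmt6_general (K T : ℕ)
    (a : ℕ → ℕ → ZMod 2) (s s' : ℕ → ZMod 2)
    (ha : ∀ i, Function.Periodic (a i) K)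
    (hs0 : ∀ k, s (k * T) = 0) (hs'0 : ∀ k, s' (k * T) = 1)
    (hcol : ∀ k i, 1 ≤ i → i < T → s (k * T + i) = a i k)
    (hcol' : ∀ k i, 1 ≤ i → i < T → s' (k * T + i) = a i k)
    (τ1 τ2 : ℕ) (h1 : 1 ≤ τ2) (h2 : τ2 < T) :
    corr (K * T) s s' (τ1 * T + τ2) =
      corr (K * T) s s (τ1 * T + τ2) + 2 * bal K (a (T - τ2)) ∧
    corr (K * T) s' s (τ1 * T + τ2) =
      corr (K * T) s s (τ1 * T + τ2) + 2 * bal K (a τ2) :=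
  ⟨corr_zero_one_right hs0 hs'0 hcol hcol' h1 h2,
    corr_zero_one_left (ha τ2) hs0 hs'0 hcol hcol' h1 h2⟩

/-- `R_{ss'}(τ) = R_s(τ) + 2d(a_{T-τ2})` and `R_{s's}(τ) = R_s(τ) + 2d(a_{τ2})`. -/
theorem stmt6 (K T : ℕ) (hK : 0 < K) (hT : 0 < T)
    (a : ℕ → ℕ → ZMod 2) (s s' : ℕ → ZMod 2)
    (ha : ∀ i, Function.Periodic (a i) K)
    (hs : Function.Periodic s (K * T)) (hs' : Function.Periodic s' (K * T))
    (hs0 : ∀ k, s (k * T) = 0) (hs'0 : ∀ k, s' (k * T) = 1)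
    (hcol : ∀ k i, 1 ≤ i → i < T → s (k * T + i) = a i k)
    (hcol' : ∀ k i, 1 ≤ i → i < T → s' (k * T + i) = a i k)
    (τ1 τ2 : ℕ) (h1 : 1 ≤ τ2) (h2 : τ2 < T) :
    corr (K * T) s s' (τ1 * T + τ2) =
      corr (K * T) s s (τ1 * T + τ2) + 2 * bal K (a (T - τ2)) ∧
    corr (K * T) s' s (τ1 * T + τ2) =
      corr (K * T) s s (τ1 * T + τ2) + 2 * bal K (a τ2) :=
  stmt6_general K T a s s' ha hs0 hs'0 hcol hcol' τ1 τ2 h1 h2
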